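/- Correctness of the decomposition: let W = QΛQᵀ + Q⊥Λ⊥Q⊥ᵀ where [Q, Q⊥] is an n×n orthogonal matrix, Q ∈ ℝ^{n×r}, Λ and Λ⊥ are diagonal with positive diagonal entries, and 0 < τ < λ_min(Λ). Define E = QQᵀ + τ⁻¹·Q⊥Λ⊥Q⊥ᵀ, 𝐐_B = Q⊗_S Q, 𝐐_N = √2·Ψ_nᵀ(Q⊗Q⊥), Σ_B⁻¹ = Λ⊗_S Λ − τ²I, and Σ_N⁻¹ = (Λ−τI)⊗Λ⊥. Then W⊗_S W = 𝐐_B Σ_B⁻¹ 𝐐_Bᵀ + 𝐐_N Σ_N⁻¹ 𝐐_Nᵀ + τ²·(E⊗_S E). -/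

import Mathlib

open Matrix
open scoped Kronecker

noncomputable section

/-- Euclidean norm of a vector. -/
def vnorm {I : Type*} [Fintype I] (v : I → ℝ) : ℝ := Real.sqrt (∑ i, v i ^ 2)

/-- Frobenius norm of a matrix. -/
def frobNorm {I J : Type*} [Fintype I] [Fintype J] (A : Matrix I J ℝ) : ℝ :=
  Real.sqrt (∑ i, ∑ j, A i j ^ 2)

/-- Spectral norm (ℓ₂ operator norm) of a matrix. -/
def specNorm {I J : Type*} [Fintype I] [Fintype J] (A : Matrix I J ℝ) : ℝ :=
  sSup {c | ∃ v : J → ℝ, vnorm v ≤ 1 ∧ c = vnorm (A *ᵥ v)}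

/-- Largest (real) eigenvalue of a square matrix. -/
def lmax {I : Type*} [Fintype I] (A : Matrix I I ℝ) : ℝ :=
  sSup {t | ∃ v : I → ℝ, v ≠ 0 ∧ A *ᵥ v = t • v}

/-- Smallest (real) eigenvalue of a square matrix. -/
def lmin {I : Type*} [Fintype I] (A : Matrix I I ℝ) : ℝ :=
  sInf {t | ∃ v : I → ℝ, v ≠ 0 ∧ A *ᵥ v = t • v}

/-- Column-stacking vectorization `vec`: `vecM X (j, i) = X i j`. -/
def vecM {J : Type*} (X : Matrix J J ℝ) : J × J → ℝ := fun p => X p.2 p.1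

/-- `Ψ` is an orthonormal basis matrix for the space of vectorized symmetric matrices:
`ΨᵀΨ = I` and `ΨΨᵀ` is the orthogonal projection onto vectorized symmetric matrices. -/
def IsSymBasis {J K : Type*} [Fintype J] [Fintype K] [DecidableEq K]
    (Ψ : Matrix (J × J) K ℝ) : Prop :=
  Ψᵀ * Ψ = 1 ∧ ∀ X : Matrix J J ℝ, Ψ *ᵥ (Ψᵀ *ᵥ vecM X) = vecM ((1/2 : ℝ) • (X + Xᵀ))

/-- Symmetric vectorization with respect to the basis matrix `Ψ`. -/
def svec {J K : Type*} [Fintype J] (Ψ : Matrix (J × J) K ℝ) (X : Matrix J J ℝ) : K → ℝ :=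
  Ψᵀ *ᵥ vecM X

/-- Symmetric Kronecker product with respect to the basis matrices `Ψ₁, Ψ₂`. -/
def skron {J J' K K' : Type*} [Fintype J] [Fintype J']
    (Ψ₁ : Matrix (J × J) K ℝ) (Ψ₂ : Matrix (J' × J') K' ℝ)
    (A B : Matrix J J' ℝ) : Matrix K K' ℝ :=
  (1/2 : ℝ) • (Ψ₁ᵀ * ((A ⊗ₖ B + B ⊗ₖ A) * Ψ₂))

/-- Positive semidefinite square root (junk value `0` off the PSD cone). -/
def psqrt {J : Type*} [Fintype J] [DecidableEq J] (A : Matrix J J ℝ) : Matrix J J ℝ :=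
  @dite _ A.PosSemidef (Classical.dec _) (fun h => (h.1.eigenvectorUnitary : Matrix J J ℝ) *
    Matrix.diagonal ((RCLike.ofReal : ℝ → ℝ) ∘ (Real.sqrt ·) ∘ h.1.eigenvalues) *
    (star h.1.eigenvectorUnitary : Matrix J J ℝ)) (fun _ => 0)

/-- Condition number in spectral norm. -/
def condNum {J : Type*} [Fintype J] [DecidableEq J] (M : Matrix J J ℝ) : ℝ :=
  specNorm M * specNorm M⁻¹

/-- Assumption A1: `W` is the Nesterov--Todd scaling point of a well-centered
primal-dual pair `(X, S)` that is `O(μ)`-close to a strictly complementary solution. -/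
def A1 {n : ℕ} (μ L δ χ₁ : ℝ) (W X S Xs Ss : Matrix (Fin n) (Fin n) ℝ) : Prop :=
  X.PosDef ∧ S.PosDef ∧ Xs.PosSemidef ∧ Ss.PosSemidef ∧ Xs * Ss = 0 ∧
    (Xs + Ss - χ₁⁻¹ • (1 : Matrix (Fin n) (Fin n) ℝ)).PosSemidef ∧
    ((1 : Matrix (Fin n) (Fin n) ℝ) - (Xs + Ss)).PosSemidef ∧
    W = psqrt X * (psqrt (psqrt X * S * psqrt X))⁻¹ * psqrt X ∧
    specNorm ((1/μ) • (psqrt X * S * psqrt X) - 1) ≤ δ ∧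
    specNorm (X - Xs) ≤ L * μ ∧ specNorm (S - Ss) ≤ L

namespace Stmt14Aux

def Kc (J : Type*) [DecidableEq J] : Matrix (J × J) (J × J) ℝ :=
  Matrix.of fun p q => if p.1 = q.2 ∧ p.2 = q.1 then 1 else 0

lemma Kc_mul {J K : Type*} [Fintype J] [DecidableEq J] (M : Matrix (J × J) K ℝ) :
    Kc J * M = Matrix.of fun p q => M (p.2, p.1) q := by
  ext p q
  simp only [Matrix.mul_apply, Kc, Matrix.of_apply]
  rw [Finset.sum_eq_single (p.2, p.1)]
  · simp
  · rintro ⟨a, b⟩ _ hq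
    rw [if_neg, zero_mul]
    rintro ⟨h1, h2⟩
    exact hq (Prod.ext h2.symm h1.symm)
  · intro h; exact absurd (Finset.mem_univ _) h

lemma mul_Kc {J K : Type*} [Fintype J] [DecidableEq J] (M : Matrix K (J × J) ℝ) :
    M * Kc J = Matrix.of fun p q => M p (q.2, q.1) := by
  ext p q
  simp only [Matrix.mul_apply, Kc, Matrix.of_apply]
  rw [Finset.sum_eq_single (q.2, q.1)]
  · simp
  · rintro ⟨a, b⟩ _ hs
    rw [if_neg, mul_zero]
    rintro ⟨h1, h2⟩
    exact hs (Prod.ext h1 h2)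
  · intro h; exact absurd (Finset.mem_univ _) h

lemma Kc_transpose {J : Type*} [DecidableEq J] : (Kc J)ᵀ = Kc J := by
  ext p q
  simp only [Matrix.transpose_apply, Kc, Matrix.of_apply]
  refine if_congr ?_ rfl rfl
  constructor
  · rintro ⟨h1, h2⟩; exact ⟨h2.symm, h1.symm⟩
  · rintro ⟨h1, h2⟩; exact ⟨h2.symm, h1.symm⟩

lemma Kc_kron {J J' : Type*} [Fintype J] [DecidableEq J] [Fintype J'] [DecidableEq J']
    (A B : Matrix J J' ℝ) :
    Kc J * (A ⊗ₖ B) = (B ⊗ₖ A) * Kc J' := by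
  rw [Kc_mul, mul_Kc]
  ext p q
  simp only [Matrix.of_apply, Matrix.kroneckerMap_apply]
  exact mul_comm _ _

lemma symBasis_proj {J K : Type*} [Fintype J] [DecidableEq J] [Fintype K] [DecidableEq K]
    {Ψ : Matrix (J × J) K ℝ} (hΨ : IsSymBasis Ψ) :
    Ψ * Ψᵀ = (1/2 : ℝ) • (1 + Kc J) := by
  ext p q
  have h := hΨ.2 (Matrix.of fun i j => (Pi.single q (1:ℝ) : J × J → ℝ) (j, i))
  have hv : vecM (Matrix.of fun i j => (Pi.single q (1:ℝ) : J × J → ℝ) (j, i))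
      = Pi.single q (1:ℝ) := rfl
  rw [hv, Matrix.mulVec_mulVec, Matrix.mulVec_single] at h
  have h2 := congrFun h p
  simp only [Pi.smul_apply, Matrix.col_apply, op_smul_eq_mul, mul_one] at h2
  rw [h2]
  simp only [vecM, Matrix.smul_apply, Matrix.add_apply, Matrix.transpose_apply,
    Matrix.of_apply, Kc, Matrix.one_apply, smul_eq_mul, Pi.single_apply, Prod.mk.eta]
  have e2 : ((p.2, p.1) = q) = (p.1 = q.2 ∧ p.2 = q.1) := by
    simp [Prod.ext_iff, and_comm]
  simp only [e2]

lemma Kc_mul_symBasis {J K : Type*} [Fintype J] [DecidableEq J] [Fintype K] [DecidableEq K]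
    {Ψ : Matrix (J × J) K ℝ} (hΨ : IsSymBasis Ψ) :
    Kc J * Ψ = Ψ := by
  have h2 : (Ψ * Ψᵀ) * Ψ = Ψ := by rw [Matrix.mul_assoc, hΨ.1, Matrix.mul_one]
  rw [symBasis_proj hΨ, Matrix.smul_mul, Matrix.add_mul, Matrix.one_mul] at h2
  have h3 := congrArg (fun M => (2:ℝ) • M) h2
  simp only [smul_smul] at h3
  norm_num at h3
  rw [two_smul] at h3
  exact add_left_cancel h3

lemma symBasis_mul_Kc {J K : Type*} [Fintype J] [DecidableEq J] [Fintype K] [DecidableEq K]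
    {Ψ : Matrix (J × J) K ℝ} (hΨ : IsSymBasis Ψ) :
    Ψᵀ * Kc J = Ψᵀ := by
  have := congrArg Matrix.transpose (Kc_mul_symBasis hΨ)
  rwa [Matrix.transpose_mul, Kc_transpose] at this

lemma absorb {J K J' K' : Type*} [Fintype J] [DecidableEq J] [Fintype K] [DecidableEq K]
    [Fintype J'] [DecidableEq J'] [Fintype K'] [DecidableEq K']
    {Ψ : Matrix (J × J) K ℝ} (hΨ : IsSymBasis Ψ)
    {Ψ' : Matrix (J' × J') K' ℝ} (hΨ' : IsSymBasis Ψ')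
    (A : Matrix J J' ℝ) :
    Ψ * Ψᵀ * ((A ⊗ₖ A) * Ψ') = (A ⊗ₖ A) * Ψ' := by
  rw [symBasis_proj hΨ, Matrix.smul_mul, Matrix.add_mul, Matrix.one_mul,
    ← Matrix.mul_assoc (Kc J), Kc_kron, Matrix.mul_assoc (A ⊗ₖ A), Kc_mul_symBasis hΨ']
  rw [← two_smul ℝ ((A ⊗ₖ A) * Ψ'), smul_smul]
  norm_num

lemma swap_middle {J K : Type*} [Fintype J] [DecidableEq J] [Fintype K] [DecidableEq K]
    {Ψ : Matrix (J × J) K ℝ} (hΨ : IsSymBasis Ψ)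
    (A B : Matrix J J ℝ) :
    Ψᵀ * ((A ⊗ₖ B) * Ψ) = Ψᵀ * ((B ⊗ₖ A) * Ψ) := by
  conv_lhs => rw [← symBasis_mul_Kc hΨ, Matrix.mul_assoc, ← Matrix.mul_assoc (Kc J),
    Kc_kron, Matrix.mul_assoc (B ⊗ₖ A), Kc_mul_symBasis hΨ]

lemma sub_kron {l m n p : Type*} (A B : Matrix l m ℝ) (C : Matrix n p ℝ) :
    (A - B) ⊗ₖ C = A ⊗ₖ C - B ⊗ₖ C := by
  ext p q
  simp only [Matrix.kroneckerMap_apply, Matrix.sub_apply, sub_mul]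

lemma kron_sub {l m n p : Type*} (A : Matrix l m ℝ) (B C : Matrix n p ℝ) :
    A ⊗ₖ (B - C) = A ⊗ₖ B - A ⊗ₖ C := by
  ext p q
  simp only [Matrix.kroneckerMap_apply, Matrix.sub_apply, mul_sub]

lemma kron_core {n : Type*} (τ : ℝ) (hτ : τ ≠ 0) (B P N : Matrix n n ℝ) :
    (B + N) ⊗ₖ (B + N)
      = B ⊗ₖ B - τ ^ 2 • (P ⊗ₖ P)
        + ((B - τ • P) ⊗ₖ N + N ⊗ₖ (B - τ • P))
        + τ ^ 2 • ((P + τ⁻¹ • N) ⊗ₖ (P + τ⁻¹ • N)) := by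
  ext p q
  simp only [Matrix.kroneckerMap_apply, Matrix.add_apply, Matrix.sub_apply,
    Matrix.smul_apply, smul_eq_mul]
  field_simp
  ring

lemma absorb' {J K J' K' : Type*} [Fintype J] [DecidableEq J] [Fintype K] [DecidableEq K]
    [Fintype J'] [DecidableEq J'] [Fintype K'] [DecidableEq K']
    {Ψ : Matrix (J × J) K ℝ} (hΨ : IsSymBasis Ψ)
    {Ψ' : Matrix (J' × J') K' ℝ} (hΨ' : IsSymBasis Ψ')
    (A : Matrix J J' ℝ) :
    Ψ * (Ψᵀ * ((A ⊗ₖ A) * Ψ')) = (A ⊗ₖ A) * Ψ' := by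
  rw [← Matrix.mul_assoc]; exact absorb hΨ hΨ' A

lemma compose {J K J' K' J'' K'' : Type*}
    [Fintype J] [DecidableEq J] [Fintype K] [DecidableEq K]
    [Fintype J'] [DecidableEq J'] [Fintype K'] [DecidableEq K']
    [Fintype J''] [DecidableEq J''] [Fintype K''] [DecidableEq K'']
    (Ψ₁ : Matrix (J × J) K ℝ)
    {Ψ₂ : Matrix (J' × J') K' ℝ} (hΨ₂ : IsSymBasis Ψ₂)
    {Ψ₃ : Matrix (J'' × J'') K'' ℝ} (hΨ₃ : IsSymBasis Ψ₃)
    (X : Matrix (J × J) (J' × J') ℝ) (A : Matrix J' J'' ℝ) :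
    (Ψ₁ᵀ * (X * Ψ₂)) * (Ψ₂ᵀ * (A ⊗ₖ A * Ψ₃)) = Ψ₁ᵀ * (X * (A ⊗ₖ A) * Ψ₃) := by
  simp only [Matrix.mul_assoc]
  rw [absorb' hΨ₂ hΨ₃]

lemma skron_eq {J J' K K' : Type*} [Fintype J] [Fintype J']
    (Ψ₁ : Matrix (J × J) K ℝ) (Ψ₂ : Matrix (J' × J') K' ℝ) (A : Matrix J J' ℝ) :
    skron Ψ₁ Ψ₂ A A = Ψ₁ᵀ * (A ⊗ₖ A * Ψ₂) := by
  unfold skron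
  rw [← two_smul ℝ (A ⊗ₖ A), Matrix.smul_mul, Matrix.mul_smul, smul_smul]
  norm_num


end Stmt14Aux

open Stmt14Aux in
/-- Lemma A.1, correctness of the decomposition:
`W ⊗_S W = 𝐐_B Σ_B⁻¹ 𝐐_Bᵀ + 𝐐_N Σ_N⁻¹ 𝐐_Nᵀ + τ²·(E ⊗_S E)`. -/
theorem stmt14 {n r : ℕ}
    (Ψn : Matrix (Fin n × Fin n) (Fin (n * (n + 1) / 2)) ℝ) (hΨn : IsSymBasis Ψn)
    (Ψr : Matrix (Fin r × Fin r) (Fin (r * (r + 1) / 2)) ℝ) (hΨr : IsSymBasis Ψr)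
    (Q : Matrix (Fin n) (Fin r) ℝ) (Qp : Matrix (Fin n) (Fin (n - r)) ℝ)
    -- `[Q, Q⊥]` is orthogonal
    (hQQ : Qᵀ * Q = 1) (hPP : Qpᵀ * Qp = 1) (hQP : Qᵀ * Qp = 0)
    (hfull : Q * Qᵀ + Qp * Qpᵀ = 1)
    -- diagonal matrices with positive entries, and `0 < τ < λ_min(Λ)`
    (Λ : Fin r → ℝ) (Λp : Fin (n - r) → ℝ)
    (hΛpos : ∀ i, 0 < Λ i) (hΛppos : ∀ i, 0 < Λp i)
    (τ : ℝ) (hτ0 : 0 < τ) (hτ : ∀ i, τ < Λ i)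
    (W : Matrix (Fin n) (Fin n) ℝ)
    (hW : W = Q * Matrix.diagonal Λ * Qᵀ + Qp * Matrix.diagonal Λp * Qpᵀ)
    (E : Matrix (Fin n) (Fin n) ℝ)
    (hE : E = Q * Qᵀ + τ⁻¹ • (Qp * Matrix.diagonal Λp * Qpᵀ))
    (QB : Matrix (Fin (n * (n + 1) / 2)) (Fin (r * (r + 1) / 2)) ℝ)
    (hQB : QB = skron Ψn Ψr Q Q)
    (QN : Matrix (Fin (n * (n + 1) / 2)) (Fin r × Fin (n - r)) ℝ)
    (hQN : QN = Real.sqrt 2 • (Ψnᵀ * (Q ⊗ₖ Qp)))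
    (SBinv : Matrix (Fin (r * (r + 1) / 2)) (Fin (r * (r + 1) / 2)) ℝ)
    (hSB : SBinv = skron Ψr Ψr (Matrix.diagonal Λ) (Matrix.diagonal Λ) - τ ^ 2 • 1)
    (SNinv : Matrix (Fin r × Fin (n - r)) (Fin r × Fin (n - r)) ℝ)
    (hSN : SNinv = (Matrix.diagonal Λ - τ • 1) ⊗ₖ Matrix.diagonal Λp) :
    skron Ψn Ψn W W = QB * SBinv * QBᵀ + QN * SNinv * QNᵀ + τ ^ 2 • skron Ψn Ψn E E := by
  have hτne : τ ≠ 0 := ne_of_gt hτ0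
  have hsqrt2 : Real.sqrt 2 * Real.sqrt 2 = 2 := Real.mul_self_sqrt (by norm_num)
  have hQB' : QB = Ψnᵀ * (Q ⊗ₖ Q * Ψr) := by rw [hQB, skron_eq]
  have hQBT : QBᵀ = Ψrᵀ * (Qᵀ ⊗ₖ Qᵀ * Ψn) := by
    rw [hQB', Matrix.transpose_mul, Matrix.transpose_mul, Matrix.transpose_transpose,
      ← Matrix.kroneckerMap_transpose, Matrix.mul_assoc]
  have hQBD : QB * (Ψrᵀ * (Matrix.diagonal Λ ⊗ₖ Matrix.diagonal Λ * Ψr))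
      = Ψnᵀ * ((Q * Matrix.diagonal Λ) ⊗ₖ (Q * Matrix.diagonal Λ) * Ψr) := by
    rw [hQB', compose Ψn hΨr hΨr, ← Matrix.mul_kronecker_mul]
  have hBB : Ψnᵀ * ((Q * Matrix.diagonal Λ) ⊗ₖ (Q * Matrix.diagonal Λ) * Ψr) * QBᵀ
      = Ψnᵀ * ((Q * Matrix.diagonal Λ * Qᵀ) ⊗ₖ (Q * Matrix.diagonal Λ * Qᵀ) * Ψn) := by
    rw [hQBT, compose Ψn hΨr hΨn, ← Matrix.mul_kronecker_mul]
  have hPP2 : QB * QBᵀ = Ψnᵀ * ((Q * Qᵀ) ⊗ₖ (Q * Qᵀ) * Ψn) := by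
    rw [hQBT, hQB', compose Ψn hΨr hΨn, ← Matrix.mul_kronecker_mul]
  have hterm1 : QB * SBinv * QBᵀ
      = Ψnᵀ * ((Q * Matrix.diagonal Λ * Qᵀ) ⊗ₖ (Q * Matrix.diagonal Λ * Qᵀ) * Ψn)
        - τ ^ 2 • (Ψnᵀ * ((Q * Qᵀ) ⊗ₖ (Q * Qᵀ) * Ψn)) := by
    rw [hSB, skron_eq, Matrix.mul_sub, Matrix.sub_mul, Matrix.mul_smul, Matrix.mul_one,
      Matrix.smul_mul, hQBD, hBB, hPP2]
  have hQNT : QNᵀ = Real.sqrt 2 • (Qᵀ ⊗ₖ Qpᵀ * Ψn) := by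
    rw [hQN, Matrix.transpose_smul, Matrix.transpose_mul, Matrix.transpose_transpose,
      ← Matrix.kroneckerMap_transpose]
  have hC : Q * (Matrix.diagonal Λ - τ • 1) * Qᵀ
      = Q * Matrix.diagonal Λ * Qᵀ - τ • (Q * Qᵀ) := by
    rw [Matrix.mul_sub, Matrix.sub_mul, Matrix.mul_smul, Matrix.mul_one, Matrix.smul_mul]
  have hterm2 : QN * SNinv * QNᵀ
      = Ψnᵀ * ((Q * Matrix.diagonal Λ * Qᵀ - τ • (Q * Qᵀ))
            ⊗ₖ (Qp * Matrix.diagonal Λp * Qpᵀ) * Ψn)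
        + Ψnᵀ * ((Qp * Matrix.diagonal Λp * Qpᵀ)
            ⊗ₖ (Q * Matrix.diagonal Λ * Qᵀ - τ • (Q * Qᵀ)) * Ψn) := by
    rw [hQNT, hQN, hSN, Matrix.smul_mul, Matrix.smul_mul, Matrix.mul_smul, smul_smul, hsqrt2]
    have e : Ψnᵀ * (Q ⊗ₖ Qp) * ((Matrix.diagonal Λ - τ • 1) ⊗ₖ Matrix.diagonal Λp)
          * (Qᵀ ⊗ₖ Qpᵀ * Ψn)
        = Ψnᵀ * ((Q * (Matrix.diagonal Λ - τ • 1) * Qᵀ)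
            ⊗ₖ (Qp * Matrix.diagonal Λp * Qpᵀ) * Ψn) := by
      simp only [Matrix.mul_assoc]
      rw [← Matrix.mul_assoc ((Matrix.diagonal Λ - τ • 1) ⊗ₖ Matrix.diagonal Λp),
        ← Matrix.mul_kronecker_mul, ← Matrix.mul_assoc (Q ⊗ₖ Qp),
        ← Matrix.mul_kronecker_mul, ← Matrix.mul_assoc Q, ← Matrix.mul_assoc Qp]
    rw [e, hC, two_smul]
    congr 1
    exact swap_middle hΨn _ _
  have key : W ⊗ₖ W
      = (Q * Matrix.diagonal Λ * Qᵀ) ⊗ₖ (Q * Matrix.diagonal Λ * Qᵀ)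
          - τ ^ 2 • ((Q * Qᵀ) ⊗ₖ (Q * Qᵀ))
        + ((Q * Matrix.diagonal Λ * Qᵀ - τ • (Q * Qᵀ)) ⊗ₖ (Qp * Matrix.diagonal Λp * Qpᵀ)
            + (Qp * Matrix.diagonal Λp * Qpᵀ)
              ⊗ₖ (Q * Matrix.diagonal Λ * Qᵀ - τ • (Q * Qᵀ)))
        + τ ^ 2 • (E ⊗ₖ E) := by
    rw [hW, hE]
    exact kron_core τ hτne _ _ _
  rw [skron_eq, skron_eq, hterm1, hterm2, key]
  simp only [Matrix.add_mul, Matrix.sub_mul, Matrix.smul_mul, Matrix.mul_add, Matrix.mul_sub,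
    Matrix.mul_smul]
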